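/- arXiv:1609.04512 — 6 statements merged into one kernel-verified Lean document; each statement's English description precedes it below -/
import Mathlib

section
/- For a platoon scheduling instance in which all release times and all lengths are integers, and for any integer d, if there exists a valid schedule with delay at most d, then there exists a valid schedule with delay at most d in which every crossing time is an integer (for example, the schedule obtained by replacing each crossing time by its floor). -/
/-- A platoon scheduling instance: `n` platoons, each with an incoming lane,
a release time and a positive length; platoons on the same lane occupy disjoint
ranges of time; a symmetric irreflexive incompatibility relation says which pairs
of platoons may not occupy the intersection simultaneously. -/
structure PlatoonInstance (n : ℕ) where
  lane : Fin n → ℕ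
  r : Fin n → ℝ
  len : Fin n → ℝ
  len_pos : ∀ i, 0 < len i
  incompat : Fin n → Fin n → Prop
  incompat_symm : ∀ i j, incompat i j → incompat j i
  incompat_irrefl : ∀ i, ¬ incompat i i
  lane_disjoint : ∀ i j, i ≠ j → lane i = lane j →
    r i + len i ≤ r j ∨ r j + len j ≤ r i

/-- A schedule (an assignment of a crossing time to each platoon) is valid if
(1) each crossing time is at least the release time; (2) platoons on the same lane
cross in release order, one finishing before the next one crosses; (3) the open
crossing intervals of incompatible platoons are disjoint. -/
def Valid {n : ℕ} (I : PlatoonInstance n) (c : Fin n → ℝ) : Prop :=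
  (∀ i, I.r i ≤ c i) ∧
  (∀ i j, i ≠ j → I.lane i = I.lane j → I.r i + I.len i ≤ I.r j →
    c i + I.len i ≤ c j) ∧
  (∀ i j, I.incompat i j →
    Disjoint (Set.Ioo (c i) (c i + I.len i)) (Set.Ioo (c j) (c j + I.len j)))

/-!
Every constraint of a valid schedule has the form `x + k ≤ y` with `k` an integer (a release time,
or a length: for intervals of positive length, disjointness means that one ends before the other
starts), and `⌊x⌋ + k = ⌊x + k⌋ ≤ ⌊y⌋`. So rounding all crossing times down keeps the schedule
valid, and it can only decrease delays.
-/

lemma floor_add_intCast_le_floor {α : Type*} [Ring α] [LinearOrder α] [IsStrictOrderedRing α]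
    [FloorRing α] {a b : α} {z : ℤ} (h : a + z ≤ b) : (⌊a⌋ : α) + z ≤ ⌊b⌋ := by
  exact_mod_cast (Int.floor_add_intCast a z).symm.trans_le (Int.floor_le_floor h)

lemma Set.Ioo_disjoint_Ioo_iff_of_lt {α : Type*} [LinearOrder α] [DenselyOrdered α]
    {a₁ a₂ b₁ b₂ : α} (ha : a₁ < a₂) (hb : b₁ < b₂) :
    Disjoint (Set.Ioo a₁ a₂) (Set.Ioo b₁ b₂) ↔ a₂ ≤ b₁ ∨ b₂ ≤ a₁ := by
  rw [Set.Ioo_disjoint_Ioo, min_le_iff, le_max_iff, le_max_iff]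
  constructor
  · rintro ((h | h) | (h | h))
    · exact absurd h ha.not_ge
    · exact Or.inl h
    · exact Or.inr h
    · exact absurd h hb.not_ge
  · rintro (h | h)
    · exact Or.inl (Or.inr h)
    · exact Or.inr (Or.inl h)

lemma Valid.floor {n : ℕ} {I : PlatoonInstance n} {c : Fin n → ℝ}
    (hr : ∀ i, ∃ z : ℤ, I.r i = z) (hlen : ∀ i, ∃ z : ℤ, I.len i = z) (hc : Valid I c) :
    Valid I (fun i => (⌊c i⌋ : ℝ)) := by
  obtain ⟨hrel, hlane, hinc⟩ := hc
  have hend : ∀ i j, c i + I.len i ≤ c j → (⌊c i⌋ : ℝ) + I.len i ≤ ⌊c j⌋ := fun i j h => by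
    obtain ⟨z, hz⟩ := hlen i
    rw [hz] at h ⊢
    exact floor_add_intCast_le_floor h
  have hIoo : ∀ (x : ℝ) i, x < x + I.len i := fun x i => lt_add_of_pos_right x (I.len_pos i)
  refine ⟨fun i => ?_, fun i j hij hl hr' => hend i j (hlane i j hij hl hr'), fun i j h => ?_⟩
  · obtain ⟨z, hz⟩ := hr i
    have hi := hrel i
    rw [hz] at hi
    exact hz ▸ Int.cast_le.2 (Int.le_floor.2 hi)
  · rw [Set.Ioo_disjoint_Ioo_iff_of_lt (hIoo _ i) (hIoo _ j)]
    exact ((Set.Ioo_disjoint_Ioo_iff_of_lt (hIoo _ i) (hIoo _ j)).1 (hinc i j h)).imp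
      (hend i j) (hend j i)

/-- If release times and lengths are integers and there is a valid schedule with
delay at most an integer `d`, then there is such a schedule whose crossing times
are all integers (e.g. replace each crossing time by its floor). -/
theorem stmt0 {n : ℕ} (I : PlatoonInstance n)
    (hr : ∀ i, ∃ z : ℤ, I.r i = z) (hlen : ∀ i, ∃ z : ℤ, I.len i = z)
    (d : ℤ)
    (h : ∃ c, Valid I c ∧ ∀ i, c i - I.r i ≤ (d : ℝ)) :
    ∃ c, Valid I c ∧ (∀ i, c i - I.r i ≤ (d : ℝ)) ∧ (∀ i, ∃ z : ℤ, c i = z) := by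
  obtain ⟨c, hc, hd⟩ := h
  refine ⟨fun i => (⌊c i⌋ : ℝ), hc.floor hr hlen, fun i => ?_, fun i => ⟨⌊c i⌋, rfl⟩⟩
  linarith [hd i, Int.floor_le (c i)]
end

section
/- For a Y-merge platoon scheduling instance and any real delay bound d, the greedy schedule with parameter d is a valid schedule, and the greedy schedule has delay at most d if and only if some valid schedule with delay at most d exists. (Equivalently: if any valid schedule with delay at most d exists, then the greedy schedule has delay at most d.) -/
/-!
Every platoon of the greedy schedule starts no earlier than its release and than the finish of
its predecessor, so the schedule is valid.

For optimality, follow the greedy run with the invariant that the remaining platoons admit a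
schedule with delay at most `d` starting no earlier than the current finish time `t`. It
suffices that the platoon sent by the greedy step is sent first in some such schedule. If
sending the other head first would already delay the chosen one beyond `d`, every such
schedule sends the chosen one first. Otherwise the chosen platoon `p` is the one released
first, and sending it first keeps the other head `q` within the bound; then `p` is moved to
the front of a good schedule and the block of `q`'s lane that it overtakes is postponed just
enough. The block still ends before the old slot of `p` ends, and it stays within the bound
because its first platoon `q` does and platoons of one lane are released at least a length
apart.
-/

/-- A platoon is a pair (release time, length). -/
abbrev Platoon := ℝ × ℝ

/-- A lane: a list of platoons in release order, with positive lengths and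
disjoint release ranges (each finishes being released before the next one starts). -/
def LaneOK (P : List Platoon) : Prop :=
  (∀ p ∈ P, 0 < p.2) ∧ P.Chain' (fun p q => p.1 + p.2 ≤ q.1)

/-- The greedy schedule with parameter `d` for a Y merge, starting with current
finish time `t` and the remaining queues of the two lanes (`false` = first lane,
`true` = second lane). At each step, `p` is the first remaining platoon with the
earlier release time and `p'` the first remaining platoon on the other lane; if
there is no `p'`, or if `max t r + ℓ - r' ≤ d`, then `p` crosses at `max t r`;
otherwise `p'` crosses at `max t r'`. The output lists, in crossing order, each
platoon together with its lane and its crossing time. -/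
noncomputable def greedy (d : ℝ) : ℝ → List Platoon → List Platoon → List (Bool × Platoon × ℝ)
  | _, [], [] => []
  | t, (r, l) :: A, [] => (false, (r, l), max t r) :: greedy d (max t r + l) A []
  | t, [], (r, l) :: B => (true, (r, l), max t r) :: greedy d (max t r + l) [] B
  | t, (r, l) :: A, (r', l') :: B =>
    if r ≤ r' then
      if max t r + l - r' ≤ d then
        (false, (r, l), max t r) :: greedy d (max t r + l) A ((r', l') :: B)
      else
        (true, (r', l'), max t r') :: greedy d (max t r' + l') ((r, l) :: A) B
    else
      if max t r' + l' - r ≤ d then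
        (true, (r', l'), max t r') :: greedy d (max t r' + l') ((r, l) :: A) B
      else
        (false, (r, l), max t r) :: greedy d (max t r + l) A ((r', l') :: B)
  termination_by t A B => A.length + B.length

/-- The minimum release time of any platoon (the initial value of `t`). -/
noncomputable def minRelease (A B : List Platoon) : ℝ :=
  WithTop.untopD 0 (((A ++ B).map Prod.fst).minimum)

/-- The platoons of the given lane appearing in a schedule sequence, in order. -/
def laneProj (b : Bool) (L : List (Bool × Platoon × ℝ)) : List Platoon :=
  (L.filter (fun e => e.1 == b)).map (fun e => e.2.1)

/-- A valid schedule for a Y merge, presented as a sequence of (lane, platoon,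
crossing time) triples in crossing order: the platoons of each lane appear exactly
in their lane order, each platoon crosses no earlier than its release time, and
each platoon finishes crossing before the next one starts (platoons on different
lanes are incompatible, and platoons on the same lane may not pass each other). -/
def ValidSeq (A B : List Platoon) (L : List (Bool × Platoon × ℝ)) : Prop :=
  laneProj false L = A ∧ laneProj true L = B ∧
  (∀ e ∈ L, e.2.1.1 ≤ e.2.2) ∧
  L.Chain' (fun e f => e.2.2 + e.2.1.2 ≤ f.2.2)

abbrev Entry := Bool × Platoon × ℝ

abbrev FinishesBefore (e f : Entry) : Prop := e.2.2 + e.2.1.2 ≤ f.2.2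

def DelayLE (d : ℝ) (L : List Entry) : Prop := ∀ e ∈ L, e.2.2 - e.2.1.1 ≤ d

def Feasible (d t : ℝ) (A B : List Platoon) : Prop :=
  ∃ L, ValidSeq A B L ∧ (∀ e ∈ L.head?, t ≤ e.2.2) ∧ DelayLE d L

def FeasibleLead (d t : ℝ) (p : Platoon) (A B : List Platoon) : Prop :=
  ∃ c S, t ≤ c ∧ ValidSeq (p :: A) B ((false, p, c) :: S) ∧ DelayLE d ((false, p, c) :: S)

def flipLane (e : Entry) : Entry := (!e.1, e.2)

section laneProj

variable {b : Bool} {e : Entry} {L : List Entry}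

@[simp]
lemma laneProj_nil : laneProj b [] = [] := rfl

lemma laneProj_cons_of_eq (h : e.1 = b) (L : List Entry) :
    laneProj b (e :: L) = e.2.1 :: laneProj b L := by
  simp [laneProj, h]

lemma laneProj_cons_of_ne (h : e.1 ≠ b) (L : List Entry) :
    laneProj b (e :: L) = laneProj b L := by
  simp [laneProj, h]

@[simp]
lemma laneProj_cons (b : Bool) (e : Entry) (L : List Entry) :
    laneProj b (e :: L) = if e.1 = b then e.2.1 :: laneProj b L else laneProj b L := by
  split_ifs with h
  exacts [laneProj_cons_of_eq h L, laneProj_cons_of_ne h L]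

lemma laneProj_append (b : Bool) (L₁ L₂ : List Entry) :
    laneProj b (L₁ ++ L₂) = laneProj b L₁ ++ laneProj b L₂ := by
  simp [laneProj]

lemma laneProj_map_flipLane (b : Bool) (L : List Entry) :
    laneProj b (L.map flipLane) = laneProj (!b) L := by
  induction L with
  | nil => rfl
  | cons e L ih => cases b <;> cases h : e.1 <;> simp_all [flipLane, laneProj]

lemma laneProj_eq_nil (h : ∀ e ∈ L, e.1 ≠ b) : laneProj b L = [] := by
  simpa [laneProj] using h

lemma laneProj_eq_map (h : ∀ e ∈ L, e.1 = b) : laneProj b L = L.map (·.2.1) := by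
  rw [laneProj, List.filter_eq_self.2 fun e he => by simp [h e he]]

lemma mem_laneProj_of_mem (he : e ∈ L) : e.2.1 ∈ laneProj e.1 L :=
  List.mem_map_of_mem (List.mem_filter.mpr ⟨he, by simp⟩)

lemma exists_mem_of_mem_laneProj {p : Platoon} (h : p ∈ laneProj b L) : ∃ c, (b, p, c) ∈ L := by
  obtain ⟨e, he, rfl⟩ := List.mem_map.mp h
  obtain ⟨he, hb⟩ := List.mem_filter.mp he
  exact ⟨e.2.2, by simpa [← beq_iff_eq.mp hb] using he⟩

lemma exists_eq_append_of_laneProj_eq_cons {p : Platoon} {A : List Platoon}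
    (h : laneProj b L = p :: A) :
    ∃ P c S, L = P ++ (b, p, c) :: S ∧ ∀ e ∈ P, e.1 ≠ b := by
  induction L with
  | nil => simp at h
  | cons e L ih =>
    by_cases hb : e.1 = b
    · rw [laneProj_cons_of_eq hb, List.cons.injEq] at h
      exact ⟨[], e.2.2, L, by rw [← hb, ← h.1]; rfl, by simp⟩
    · rw [laneProj_cons_of_ne hb] at h
      obtain ⟨P, c, S, rfl, hP⟩ := ih h
      exact ⟨e :: P, c, S, rfl, List.forall_mem_cons.2 ⟨hb, hP⟩⟩

end laneProj

lemma LaneOK.tail {p : Platoon} {A : List Platoon} (h : LaneOK (p :: A)) : LaneOK A :=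
  ⟨fun q hq => h.1 q (List.mem_cons_of_mem _ hq), List.IsChain.tail h.2⟩

section ValidSeq

variable {A B : List Platoon} {L : List Entry}

lemma ValidSeq.swap (h : ValidSeq A B L) : ValidSeq B A (L.map flipLane) := by
  obtain ⟨hA, hB, hrel, hchain⟩ := h
  refine ⟨?_, ?_, List.forall_mem_map.2 hrel, ?_⟩
  · simpa [laneProj_map_flipLane] using hB
  · simpa [laneProj_map_flipLane] using hA
  · exact List.isChain_map_of_isChain flipLane (fun _ _ h => h) hchain

lemma ValidSeq.mem_append {e : Entry} (h : ValidSeq A B L) (he : e ∈ L) : e.2.1 ∈ A ++ B := by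
  have hm := mem_laneProj_of_mem he
  cases hb : e.1
  · rw [hb, h.1] at hm; exact List.mem_append_left _ hm
  · rw [hb, h.2.1] at hm; exact List.mem_append_right _ hm

lemma ValidSeq.pos_length (h : ValidSeq A B L) (hA : LaneOK A) (hB : LaneOK B) :
    ∀ e ∈ L, 0 < e.2.1.2 := fun _ he =>
  (List.mem_append.1 (h.mem_append he)).elim (hA.1 _) (hB.1 _)

lemma ValidSeq.minRelease_le {e : Entry} (h : ValidSeq A B L) (he : e ∈ L) :
    minRelease A B ≤ e.2.2 :=
  (WithTop.untopD_le (List.minimum_le_of_mem' (List.mem_map_of_mem (h.mem_append he)))).trans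
    (h.2.2.1 e he)

lemma ValidSeq.pairwise (h : ValidSeq A B L) (hA : LaneOK A) (hB : LaneOK B) :
    L.Pairwise FinishesBefore := by
  -- with the nonnegativity of the length attached, the relation is transitive
  let R : Entry → Entry → Prop := fun e f => e.2.2 + e.2.1.2 ≤ f.2.2 ∧ 0 ≤ f.2.1.2
  have : Trans R R R := ⟨fun {e f g} (hef : R e f) (hfg : R f g) =>
    ⟨show e.2.2 + e.2.1.2 ≤ g.2.2 by linarith [hef.1, hfg.1, hef.2], hfg.2⟩⟩
  have hpos := h.pos_length hA hB
  have hR : L.IsChain R := h.2.2.2.imp_of_mem_imp fun _ f _ hf hef => ⟨hef, (hpos f hf).le⟩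
  exact hR.pairwise.imp And.left

lemma ValidSeq.cons (h : ValidSeq A B L) (b : Bool) (p : Platoon) {c : ℝ} (hp : p.1 ≤ c)
    (hL : ∀ e ∈ L.head?, c + p.2 ≤ e.2.2) :
    ValidSeq (bif b then A else p :: A) (bif b then p :: B else B) ((b, p, c) :: L) := by
  obtain ⟨hA, hB, hrel, hchain⟩ := h
  refine ⟨?_, ?_, List.forall_mem_cons.2 ⟨hp, hrel⟩, List.isChain_cons.2 ⟨hL, hchain⟩⟩ <;>
    cases b <;> simpa

end ValidSeq

def postpone (s : ℝ) : List Entry → List Entry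
  | [] => []
  | e :: P => (e.1, e.2.1, max s e.2.2) :: postpone (max s e.2.2 + e.2.1.2) P

section postpone

variable {s : ℝ} {P : List Entry}

lemma laneProj_postpone (b : Bool) (s : ℝ) (P : List Entry) :
    laneProj b (postpone s P) = laneProj b P := by
  induction P generalizing s with
  | nil => rfl
  | cons e P ih =>
    simp [postpone, ih]

lemma le_of_mem_head?_postpone : ∀ e ∈ (postpone s P).head?, s ≤ e.2.2 := by
  cases P <;> simp [postpone]

lemma isChain_postpone (s : ℝ) (P : List Entry) : (postpone s P).IsChain FinishesBefore := by
  induction P generalizing s with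
  | nil => exact .nil
  | cons e P ih => exact List.isChain_cons.2 ⟨le_of_mem_head?_postpone, ih _⟩

lemma release_le_of_mem_postpone (h : ∀ e ∈ P, e.2.1.1 ≤ e.2.2) :
    ∀ e ∈ postpone s P, e.2.1.1 ≤ e.2.2 := by
  induction P generalizing s with
  | nil => simp [postpone]
  | cons e P ih =>
    rw [List.forall_mem_cons] at h
    exact List.forall_mem_cons.2 ⟨h.1.trans (le_max_right _ _), ih h.2⟩

/-- If the first entry is moved by at most `δ`, then so is every entry. -/
lemma finish_le_of_mem_postpone {δ u : ℝ} (hδ : 0 ≤ δ) (hP : P.IsChain FinishesBefore)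
    (hs : ∀ e ∈ P.head?, s ≤ e.2.2 + δ) (hu : ∀ e ∈ P, e.2.2 + e.2.1.2 ≤ u) :
    ∀ e ∈ postpone s P, e.2.2 + e.2.1.2 ≤ u + δ := by
  induction P generalizing s with
  | nil => simp [postpone]
  | cons e P ih =>
    rw [List.forall_mem_cons] at hu
    have he : max s e.2.2 ≤ e.2.2 + δ := max_le (hs e rfl) (by linarith)
    refine List.forall_mem_cons.2 ⟨by dsimp only; linarith [hu.1], ih hP.tail ?_ hu.2⟩
    intro f hf
    linarith [(List.isChain_cons.1 hP).1 f hf]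

lemma delayLE_postpone {d : ℝ}
    (hgap : (P.map (·.2.1)).IsChain (fun p q => p.1 + p.2 ≤ q.1))
    (hs : ∀ e ∈ P.head?, s ≤ e.2.1.1 + d) (hd : DelayLE d P) : DelayLE d (postpone s P) := by
  induction P generalizing s with
  | nil => simp [postpone, DelayLE]
  | cons e P ih =>
    rw [DelayLE, List.forall_mem_cons] at hd
    have he : max s e.2.2 ≤ e.2.1.1 + d := max_le (hs e rfl) (by linarith [hd.1])
    rw [List.map_cons, List.isChain_cons] at hgap
    refine List.forall_mem_cons.2 ⟨by dsimp only; linarith, ih hgap.2 ?_ hd.2⟩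
    intro f hf
    have := hgap.1 f.2.1 (by cases P <;> simp_all)
    linarith

end postpone

lemma isChain_cons_postpone_append {x : Entry} {P S : List Entry} {δ u : ℝ} (hδ : 0 ≤ δ)
    (hP : P.IsChain FinishesBefore) (hS : S.IsChain FinishesBefore)
    (hxP : ∀ e ∈ P.head?, x.2.2 + x.2.1.2 ≤ e.2.2 + δ) (hPu : ∀ e ∈ P, e.2.2 + e.2.1.2 ≤ u)
    (hxu : x.2.2 + x.2.1.2 ≤ u + δ) (huS : ∀ e ∈ S.head?, u + δ ≤ e.2.2) :
    (x :: (postpone (x.2.2 + x.2.1.2) P ++ S)).IsChain FinishesBefore := by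
  have hfin := finish_le_of_mem_postpone hδ hP hxP hPu
  refine List.isChain_cons.2 ⟨?_, List.isChain_append.2 ⟨isChain_postpone _ _, hS, ?_⟩⟩
  · rw [List.head?_append]
    cases hx : (postpone (x.2.2 + x.2.1.2) P).head? with
    | some e => exact fun f hf => (Option.mem_some_iff.1 hf) ▸ le_of_mem_head?_postpone e hx
    | none => exact fun f hf => hxu.trans (huS f hf)
  · exact fun e he f hf => (hfin e (List.mem_of_mem_getLast? he)).trans (huS f hf)

section Feasible

variable {d t : ℝ} {p q : Platoon} {A B : List Platoon} {L : List Entry}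

lemma ValidSeq.eq_cons_of_right_nil (h : ValidSeq (p :: A) [] L) :
    ∃ c S, L = (false, p, c) :: S := by
  obtain ⟨hA, hB, -⟩ := h
  rcases L with _ | ⟨⟨_ | _, x, c⟩, S⟩ <;> simp at hA hB
  exact ⟨c, S, by rw [hA.1]⟩

lemma ValidSeq.eq_cons (h : ValidSeq (p :: A) (q :: B) L) :
    ∃ c S, L = (false, p, c) :: S ∨ L = (true, q, c) :: S := by
  obtain ⟨hA, hB, -⟩ := h
  rcases L with _ | ⟨⟨_ | _, x, c⟩, S⟩ <;> simp at hA hB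
  · exact ⟨c, S, .inl (by rw [hA.1])⟩
  · exact ⟨c, S, .inr (by rw [hB.1])⟩

lemma Feasible.swap (h : Feasible d t A B) : Feasible d t B A := by
  obtain ⟨L, hv, ht, hd⟩ := h
  refine ⟨L.map flipLane, hv.swap, ?_, List.forall_mem_map.2 hd⟩
  intro e he
  rw [List.head?_map] at he
  obtain ⟨f, hf, rfl⟩ := Option.mem_map.1 he
  exact ht f hf

lemma FeasibleLead.step (h : FeasibleLead d t p A B) :
    max t p.1 - p.1 ≤ d ∧ Feasible d (max t p.1 + p.2) A B := by
  obtain ⟨c, S, htc, ⟨hA, hB, hrel, hchain⟩, hd⟩ := h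
  rw [DelayLE, List.forall_mem_cons] at hd
  rw [List.forall_mem_cons] at hrel
  have hc : max t p.1 ≤ c := max_le htc hrel.1
  refine ⟨by linarith [hd.1], S, ⟨by simpa using hA, by simpa using hB, hrel.2, hchain.tail⟩,
    fun e he => ?_, hd.2⟩
  linarith [(List.isChain_cons.1 hchain).1 e he]

lemma Feasible.lead_of_right_nil (h : Feasible d t (p :: A) []) : FeasibleLead d t p A [] := by
  obtain ⟨L, hv, ht, hd⟩ := h
  obtain ⟨c, S, rfl⟩ := hv.eq_cons_of_right_nil
  exact ⟨c, S, ht _ rfl, hv, hd⟩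

/-- If sending `q` first already delays `p` beyond `d`, every good schedule sends `p` first. -/
lemma Feasible.lead_of_late (hA : LaneOK (p :: A)) (hB : LaneOK (q :: B))
    (hlate : d < max t q.1 + q.2 - p.1) (h : Feasible d t (p :: A) (q :: B)) :
    FeasibleLead d t p A (q :: B) := by
  obtain ⟨L, hv, ht, hd⟩ := h
  obtain ⟨c, S, rfl | rfl⟩ := hv.eq_cons
  · exact ⟨c, S, ht _ rfl, hv, hd⟩
  · exfalso
    obtain ⟨c', hp⟩ : ∃ c', (false, p, c') ∈ S :=
      exists_mem_of_mem_laneProj (by simp [show laneProj false S = p :: A by simpa using hv.1])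
    have hqp := List.rel_of_pairwise_cons (hv.pairwise hA hB) hp
    have hq : max t q.1 ≤ c := max_le (ht _ rfl) (hv.2.2.1 _ List.mem_cons_self)
    linarith [hd _ (List.mem_cons_of_mem _ hp)]

/-- The exchange argument: `p` is moved to the front and the block `P` of the second lane that
it overtakes is postponed. -/
lemma Feasible.lead_of_early (hA : LaneOK (p :: A)) (hB : LaneOK (q :: B)) (hpq : p.1 ≤ q.1)
    (hslack : max t p.1 + p.2 - q.1 ≤ d) (h : Feasible d t (p :: A) (q :: B)) :
    FeasibleLead d t p A (q :: B) := by
  obtain ⟨L, hv, ht, hd⟩ := h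
  have hpos := hv.pos_length hA hB
  have hpair := hv.pairwise hA hB
  obtain ⟨hLA, hLB, hrel, hchain⟩ := hv
  obtain ⟨P, c, S, rfl, hP⟩ := exists_eq_append_of_laneProj_eq_cons hLA
  have hPA : laneProj false P = [] := laneProj_eq_nil hP
  have hPB : laneProj true P = P.map (·.2.1) := laneProj_eq_map (by simpa using hP)
  simp only [laneProj_append, hPA, hPB, laneProj_cons, if_pos, List.nil_append, List.cons.injEq,
    true_and, Bool.false_eq_true, if_false] at hLA hLB
  obtain ⟨hcP, hcpS, -⟩ := List.isChain_append.1 hchain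
  rw [List.pairwise_append, List.pairwise_cons] at hpair
  have hPc : ∀ e ∈ P, e.2.2 + e.2.1.2 ≤ c := fun e he => hpair.2.2 e he _ List.mem_cons_self
  have hcS : ∀ e ∈ S, c + p.2 ≤ e.2.2 := hpair.2.1.1
  obtain ⟨hPt, hPq, htc⟩ : (∀ e ∈ P.head?, max t p.1 ≤ e.2.2) ∧ (∀ e ∈ P.head?, e.2.1 = q) ∧
      t ≤ c := by
    rcases P with _ | ⟨e, P⟩
    · simpa using ht
    · simp only [List.map_cons, List.cons_append, List.cons.injEq] at hLB
      have hte : t ≤ e.2.2 := ht e rfl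
      have hqe : q.1 ≤ e.2.2 := hLB.1 ▸ hrel e List.mem_cons_self
      refine ⟨by simpa using ⟨hte, hpq.trans hqe⟩, by simpa using hLB.1, ?_⟩
      linarith [hPc e List.mem_cons_self, hpos e List.mem_cons_self]
  set m := max t p.1
  have hpc : (false, p, c) ∈ P ++ (false, p, c) :: S := by simp
  have hmc : m ≤ c := max_le htc (hrel _ hpc)
  refine ⟨m, postpone (m + p.2) P ++ S, le_max_left _ _, ⟨?_, ?_, ?_, ?_⟩, ?_⟩
  · simp [laneProj_append, laneProj_postpone, hPA, hLA]
  · simp [laneProj_append, laneProj_postpone, hPB, hLB]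
  · refine List.forall_mem_cons.2 ⟨le_max_right _ _, List.forall_mem_append.2 ⟨?_, ?_⟩⟩
    · exact release_le_of_mem_postpone fun e he => hrel e (List.mem_append_left _ he)
    · exact fun e he => hrel e (by simp [he])
  · exact isChain_cons_postpone_append (x := (false, p, m)) (hA.1 p List.mem_cons_self).le hcP
      (List.isChain_cons.1 hcpS).2 (fun e he => by linarith [hPt e he]) hPc (by linarith)
      (fun e he => hcS e (List.mem_of_mem_head? he))
  · refine List.forall_mem_cons.2 ⟨by linarith [hd _ hpc], List.forall_mem_append.2 ⟨?_, ?_⟩⟩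
    · refine delayLE_postpone (List.IsChain.prefix hB.2 ⟨_, hLB⟩) (fun e he => ?_)
        fun e he => hd e (List.mem_append_left _ he)
      rw [hPq e he]
      linarith
    · exact fun e he => hd e (by simp [he])

section greedy

lemma le_of_mem_head?_greedy (d t : ℝ) (A B : List Platoon) :
    ∀ e ∈ (greedy d t A B).head?, t ≤ e.2.2 := by
  fun_induction greedy d t A B <;> simp

lemma validSeq_greedy (d t : ℝ) (A B : List Platoon) : ValidSeq A B (greedy d t A B) := by
  fun_induction greedy d t A B
  all_goals first
    | exact ⟨rfl, rfl, by simp, .nil⟩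
    | exact ValidSeq.cons ‹_› false _ (le_max_right _ _) (le_of_mem_head?_greedy _ _ _ _)
    | exact ValidSeq.cons ‹_› true _ (le_max_right _ _) (le_of_mem_head?_greedy _ _ _ _)

lemma delayLE_greedy {d t : ℝ} {A B : List Platoon} (hA : LaneOK A) (hB : LaneOK B)
    (h : Feasible d t A B) : DelayLE d (greedy d t A B) := by
  fun_induction greedy d t A B with
  | case1 => simp [DelayLE]
  | case2 t r l A ih =>
    obtain ⟨hdelay, hF⟩ := h.lead_of_right_nil.step
    exact List.forall_mem_cons.2 ⟨hdelay, ih hA.tail hB hF⟩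
  | case3 t r l B ih =>
    obtain ⟨hdelay, hF⟩ := h.swap.lead_of_right_nil.step
    exact List.forall_mem_cons.2 ⟨hdelay, ih hA hB.tail hF.swap⟩
  | case4 t r l A r' l' B hrr' hslack ih =>
    obtain ⟨hdelay, hF⟩ := (h.lead_of_early hA hB hrr' hslack).step
    exact List.forall_mem_cons.2 ⟨hdelay, ih hA.tail hB hF⟩
  | case5 t r l A r' l' B _ hlate ih =>
    obtain ⟨hdelay, hF⟩ := (h.swap.lead_of_late hB hA (by linarith)).step
    exact List.forall_mem_cons.2 ⟨hdelay, ih hA hB.tail hF.swap⟩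
  | case6 t r l A r' l' B hrr' hslack ih =>
    obtain ⟨hdelay, hF⟩ := (h.swap.lead_of_early hB hA (le_of_not_ge hrr') hslack).step
    exact List.forall_mem_cons.2 ⟨hdelay, ih hA hB.tail hF.swap⟩
  | case7 t r l A r' l' B _ hlate ih =>
    obtain ⟨hdelay, hF⟩ := (h.lead_of_late hA hB (by linarith)).step
    exact List.forall_mem_cons.2 ⟨hdelay, ih hA.tail hB hF⟩

end greedy

/-- The greedy schedule is always valid, and it has delay at most `d` if and only
if some valid schedule with delay at most `d` exists. -/
theorem stmt3 (A B : List Platoon) (hA : LaneOK A) (hB : LaneOK B) (d : ℝ) :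
    ValidSeq A B (greedy d (minRelease A B) A B) ∧
    ((∀ e ∈ greedy d (minRelease A B) A B, e.2.2 - e.2.1.1 ≤ d) ↔
      ∃ L, ValidSeq A B L ∧ ∀ e ∈ L, e.2.2 - e.2.1.1 ≤ d) := by
  have hvalid := validSeq_greedy d (minRelease A B) A B
  refine ⟨hvalid, fun h => ⟨_, hvalid, h⟩, ?_⟩
  rintro ⟨L, hv, hd⟩
  exact delayLE_greedy hA hB ⟨L, hv, fun e he => hv.minRelease_le (List.mem_of_mem_head? he), hd⟩
end Feasible
end

section
/- Exchange step for the Y-merge greedy algorithm: let d be a real delay bound and let S be a left-justified valid schedule with delay at most d for a Y-merge instance. Suppose that for some set P of platoons forming, on each lane, an initial segment in release order, all platoons of P cross before all others in S and finish by time t; let p_i and p_j be the first remaining platoons on the two lanes, with release times r_i ≤ r_j and lengths ℓ_i, ℓ_j; suppose max(t, r_i) + ℓ_i − r_j ≤ d but in S platoon p_j crosses before p_i. Then the left-justified schedule S' whose crossing order is obtained from that of S by moving p_i to cross immediately after the platoons of P (keeping all other platoons in the same relative order as in S) is a valid schedule with delay at most d. -/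
/-- Left-justified scheduling of a crossing order, where the previous platoon
finished at time `t`: each platoon crosses at the maximum of its release time and
the previous platoon's crossing time plus length. -/
noncomputable def leftJust : ℝ → List (Bool × Platoon) → List (Bool × Platoon × ℝ)
  | _, [] => []
  | t, (b, p) :: L => (b, p, max t p.1) :: leftJust (max t p.1 + p.2) L

/-- The left-justified schedule for a crossing order: the first platoon crosses at
its release time, and each subsequent platoon crosses at the maximum of its release
time and the previous platoon's crossing time plus length. -/
noncomputable def leftJustStart : List (Bool × Platoon) → List (Bool × Platoon × ℝ)
  | [] => []
  | (b, p) :: L => (b, p, p.1) :: leftJust (p.1 + p.2) L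

/-!
Moving `pᵢ` forward leaves the schedule of the prefix untouched, and `pᵢ` now crosses at
`max T rᵢ`, where `T ≤ t` is the time the prefix finishes; `T` is at most the old crossing time
of `pᵢ`, so its delay does not grow. The other-lane platoons `pⱼ, …` that crossed before `pᵢ`
in `S` are pushed back, but they form a run of one lane, whose release ranges are disjoint, so
along the run the delay never grows and is bounded by that of `pⱼ`, namely
`max t rᵢ + ℓᵢ - rⱼ ≤ d`. The run now finishes at most `ℓᵢ` later than before, hence no later
than `pᵢ` used to, and left-justified schedules are monotone in their start time, so the
platoons after it are not delayed more. The lanes are unchanged because `pᵢ` only overtakes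
platoons of the other lane.
-/

noncomputable def leftJustEnd : ℝ → List (Bool × Platoon) → ℝ
  | t, [] => t
  | t, (_, p) :: L => leftJustEnd (max t p.1 + p.2) L

def DelayBounded (d : ℝ) (S : List (Bool × Platoon × ℝ)) : Prop :=
  ∀ e ∈ S, e.2.2 - e.2.1.1 ≤ d

section LeftJust

variable {t s : ℝ} {L : List (Bool × Platoon)}

lemma leftJust_append (t : ℝ) (K L : List (Bool × Platoon)) :
    leftJust t (K ++ L) = leftJust t K ++ leftJust (leftJustEnd t K) L := by
  induction K generalizing t with
  | nil => rfl
  | cons x K ih => obtain ⟨b, p⟩ := x; simp [leftJust, leftJustEnd, ih]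

lemma leftJust_eq_leftJustStart (hs : ∀ x ∈ L.head?, s ≤ x.2.1) :
    leftJust s L = leftJustStart L := by
  match L, hs with
  | [], _ => rfl
  | (b, p) :: L, hs => simp [leftJust, leftJustStart, max_eq_right (hs (b, p) rfl)]

lemma exists_leftJust_eq_leftJustStart (L : List (Bool × Platoon)) :
    ∃ s, leftJust s L = leftJustStart L := by
  cases L with
  | nil => exact ⟨0, rfl⟩
  | cons x L => exact ⟨x.2.1, leftJust_eq_leftJustStart (by simp)⟩

lemma length_leftJust (t : ℝ) (L : List (Bool × Platoon)) : (leftJust t L).length = L.length := by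
  induction L generalizing t with
  | nil => rfl
  | cons x L ih => obtain ⟨b, p⟩ := x; simp [leftJust, ih]

lemma exists_leftJustStart_append (σ : List (Bool × Platoon)) (r : ℝ) :
    ∃ s ≤ r, ∀ X : List (Bool × Platoon), (∀ x ∈ X.head?, r ≤ x.2.1) →
      leftJustStart (σ ++ X) = leftJust s σ ++ leftJust (leftJustEnd s σ) X := by
  cases σ with
  | nil => exact ⟨r, le_rfl, fun X hX => (leftJust_eq_leftJustStart hX).symm⟩
  | cons x σ =>
    refine ⟨min r x.2.1, min_le_left _ _, fun X _ => ?_⟩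
    rw [← leftJust_append, leftJust_eq_leftJustStart]
    simp

lemma release_le_of_mem_leftJust : ∀ e ∈ leftJust t L, e.2.1.1 ≤ e.2.2 := by
  induction L generalizing t with
  | nil => simp [leftJust]
  | cons x L ih =>
    obtain ⟨b, p⟩ := x
    simp only [leftJust, List.forall_mem_cons]
    exact ⟨le_max_right t p.1, ih⟩

lemma leftJust_isChain : (leftJust t L).IsChain (fun e f => e.2.2 + e.2.1.2 ≤ f.2.2) := by
  induction L generalizing t with
  | nil => exact List.isChain_nil
  | cons x L ih =>
    obtain ⟨b, p⟩ := x
    refine List.isChain_cons.mpr ⟨fun f hf => ?_, ih⟩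
    cases L with
    | nil => simp [leftJust] at hf
    | cons y L =>
      obtain ⟨c, q⟩ := y
      simp only [leftJust, List.head?_cons, Option.mem_def, Option.some.injEq] at hf
      subst hf
      exact le_max_left _ _

lemma laneProj_leftJust (b : Bool) (t : ℝ) (L : List (Bool × Platoon)) :
    laneProj b (leftJust t L) = (L.filter (·.1 == b)).map (·.2) := by
  induction L generalizing t with
  | nil => rfl
  | cons x L ih =>
    obtain ⟨c, p⟩ := x
    have := ih (max t p.1 + p.2)
    simp only [laneProj] at this ⊢
    by_cases hc : c = b <;> simp [leftJust, hc, this]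

lemma validSeq_leftJustStart_iff {A B : List Platoon} {L : List (Bool × Platoon)} :
    ValidSeq A B (leftJustStart L) ↔
      (L.filter (·.1 == false)).map (·.2) = A ∧ (L.filter (·.1 == true)).map (·.2) = B := by
  obtain ⟨s, hs⟩ := exists_leftJust_eq_leftJustStart L
  rw [ValidSeq, ← hs, laneProj_leftJust, laneProj_leftJust]
  exact ⟨fun h => ⟨h.1, h.2.1⟩,
    fun h => ⟨h.1, h.2, release_le_of_mem_leftJust, leftJust_isChain⟩⟩

lemma le_leftJustEnd (h : ∀ x ∈ L, 0 ≤ x.2.2) : t ≤ leftJustEnd t L := by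
  induction L generalizing t with
  | nil => exact le_rfl
  | cons x L ih =>
    obtain ⟨b, p⟩ := x
    have hp : 0 ≤ p.2 := h _ List.mem_cons_self
    calc t ≤ max t p.1 + p.2 := by linarith [le_max_left t p.1]
      _ ≤ _ := ih fun x hx => h x (List.mem_cons_of_mem _ hx)

lemma leftJustEnd_mono (L : List (Bool × Platoon)) : Monotone (leftJustEnd · L) := by
  induction L with
  | nil => exact fun _ _ h => h
  | cons x L ih =>
    obtain ⟨b, p⟩ := x
    exact fun u v huv => ih (by gcongr)

lemma leftJustEnd_add_le (hs : 0 ≤ s) : leftJustEnd (t + s) L ≤ leftJustEnd t L + s := by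
  induction L generalizing t with
  | nil => exact le_rfl
  | cons x L ih =>
    obtain ⟨b, p⟩ := x
    calc leftJustEnd (max (t + s) p.1 + p.2) L
        ≤ leftJustEnd (max t p.1 + p.2 + s) L := by
          refine leftJustEnd_mono L ?_
          linarith [max_le (by linarith [le_max_left t p.1] : t + s ≤ max t p.1 + s)
            (by linarith [le_max_right t p.1] : p.1 ≤ max t p.1 + s)]
      _ ≤ leftJustEnd (max t p.1 + p.2) L + s := ih

lemma leftJustEnd_cons_max {x : Bool × Platoon} (h : s ≤ x.2.1) :
    leftJustEnd (max t s) (x :: L) = leftJustEnd t (x :: L) := by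
  obtain ⟨b, p⟩ := x
  simp only [leftJustEnd, max_assoc, max_eq_right h]

lemma leftJustEnd_le_max (h : ∀ e ∈ leftJust s L, e.2.2 + e.2.1.2 ≤ t) :
    leftJustEnd s L ≤ max s t := by
  induction L generalizing s with
  | nil => exact le_max_left s t
  | cons x L ih =>
    obtain ⟨b, p⟩ := x
    simp only [leftJust, List.forall_mem_cons] at h
    calc leftJustEnd (max s p.1 + p.2) L ≤ max (max s p.1 + p.2) t := ih h.2
      _ ≤ max s t := max_le (h.1.trans (le_max_right s t)) (le_max_right s t)

end LeftJust

section Delay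

variable {d : ℝ}

lemma delayBounded_append {S S' : List (Bool × Platoon × ℝ)} :
    DelayBounded d (S ++ S') ↔ DelayBounded d S ∧ DelayBounded d S' :=
  List.forall_mem_append

lemma delayBounded_cons {e : Bool × Platoon × ℝ} {S : List (Bool × Platoon × ℝ)} :
    DelayBounded d (e :: S) ↔ e.2.2 - e.2.1.1 ≤ d ∧ DelayBounded d S :=
  List.forall_mem_cons

lemma DelayBounded.leftJust_of_le {u v : ℝ} {L : List (Bool × Platoon)}
    (hv : DelayBounded d (leftJust v L)) (huv : u ≤ v) : DelayBounded d (leftJust u L) := by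
  induction L generalizing u v with
  | nil => exact hv
  | cons x L ih =>
    obtain ⟨b, p⟩ := x
    simp only [DelayBounded, leftJust, List.forall_mem_cons] at hv ⊢
    exact ⟨by linarith [max_le_max huv (le_refl p.1)], ih hv.2 (by gcongr)⟩

lemma delayBounded_leftJust_of_isChain (hd : 0 ≤ d) {u : ℝ} {K : List (Bool × Platoon)}
    (hK : (K.map (·.2)).IsChain (fun p q => p.1 + p.2 ≤ q.1))
    (hu : ∀ x ∈ K.head?, u ≤ x.2.1 + d) : DelayBounded d (leftJust u K) := by
  induction K generalizing u with
  | nil => simp [DelayBounded, leftJust]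
  | cons x K ih =>
    obtain ⟨b, p⟩ := x
    have hmax : max u p.1 ≤ p.1 + d := max_le (hu _ rfl) (by linarith)
    simp only [DelayBounded, leftJust, List.forall_mem_cons]
    refine ⟨by linarith, ih hK.tail fun y hy => ?_⟩
    cases K with
    | nil => simp at hy
    | cons z K =>
      obtain rfl : z = y := by simpa using hy
      have := (List.isChain_cons_cons.mp hK).1
      linarith

lemma delayBounded_leftJust_moveFront {T : ℝ} {x y : Bool × Platoon} {M N : List (Bool × Platoon)}
    (hlen : ∀ z ∈ x :: M, 0 ≤ z.2.2) (hy : 0 ≤ y.2.2)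
    (hchain : ((x :: M).map (·.2)).IsChain (fun p q => p.1 + p.2 ≤ q.1))
    (hyx : y.2.1 ≤ x.2.1) (hstart : max T y.2.1 + y.2.2 ≤ x.2.1 + d)
    (hold : DelayBounded d (leftJust T (x :: M ++ y :: N))) :
    DelayBounded d (leftJust T (y :: (x :: M ++ N))) := by
  obtain ⟨b, r, l⟩ := y
  set F := leftJustEnd T (x :: M)
  have hold_eq : leftJust T (x :: M ++ (b, r, l) :: N)
      = leftJust T (x :: M) ++ (b, (r, l), max F r) :: leftJust (max F r + l) N := by
    rw [leftJust_append]; rfl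
  rw [hold_eq, delayBounded_append, delayBounded_cons] at hold
  obtain ⟨-, hr, hN⟩ := hold
  have hd : 0 ≤ d := by linarith [le_max_right F r]
  have hTF : T ≤ F := le_leftJustEnd hlen
  have hend : leftJustEnd (max T r + l) (x :: M) ≤ max F r + l := calc
    _ ≤ leftJustEnd (max T r) (x :: M) + l := leftJustEnd_add_le hy
    _ = F + l := by rw [leftJustEnd_cons_max hyx]
    _ ≤ max F r + l := by linarith [le_max_left F r]
  rw [leftJust, leftJust_append, delayBounded_cons, delayBounded_append]
  refine ⟨?_, delayBounded_leftJust_of_isChain hd hchain ?_, hN.leftJust_of_le hend⟩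
  · linarith [max_le_max hTF (le_refl r)]
  · simpa using hstart

end Delay

section Lanes

variable {L : List (Bool × Platoon)} {b : Bool}

lemma laneOK_filter_of_validSeq {A B : List Platoon} (hv : ValidSeq A B (leftJustStart L))
    (hA : LaneOK A) (hB : LaneOK B) (b : Bool) : LaneOK ((L.filter (·.1 == b)).map (·.2)) := by
  rw [validSeq_leftJustStart_iff] at hv
  cases b
  · exact hv.1 ▸ hA
  · exact hv.2 ▸ hB

lemma LaneOK.length_pos_of_mem (hlane : LaneOK ((L.filter (·.1 == b)).map (·.2)))
    {x : Bool × Platoon} (hx : x ∈ L) (hxb : x.1 = b) : 0 < x.2.2 :=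
  hlane.1 _ (List.mem_map_of_mem (List.mem_filter.mpr ⟨hx, by simp [hxb]⟩))

lemma LaneOK.isChain_of_infix (hlane : LaneOK ((L.filter (·.1 == b)).map (·.2)))
    {K : List (Bool × Platoon)} (hKL : K <:+: L) (hK : ∀ x ∈ K, x.1 = b) :
    (K.map (·.2)).IsChain (fun p q => p.1 + p.2 ≤ q.1) := by
  have hKK : K.filter (·.1 == b) = K := List.filter_eq_self.mpr (by simpa using hK)
  exact List.IsChain.infix hlane.2 (hKK ▸ (hKL.filter _).map _)

lemma filter_append_cons_eq_filter_cons_append {y : Bool × Platoon} {K N : List (Bool × Platoon)}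
    (hK : ∀ x ∈ K, x.1 ≠ y.1) (b : Bool) :
    (K ++ y :: N).filter (·.1 == b) = (y :: (K ++ N)).filter (·.1 == b) := by
  by_cases hb : y.1 = b
  · have hKb : K.filter (·.1 == b) = [] :=
      List.filter_eq_nil_iff.mpr fun x hx => by simpa [← hb] using hK x hx
    simp [hb, hKb]
  · simp [hb]

lemma validSeq_leftJustStart_moveFront {A B : List Platoon} {σ K N : List (Bool × Platoon)}
    {y : Bool × Platoon} (hv : ValidSeq A B (leftJustStart (σ ++ (K ++ y :: N))))
    (hK : ∀ x ∈ K, x.1 ≠ y.1) : ValidSeq A B (leftJustStart (σ ++ y :: (K ++ N))) := by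
  rw [validSeq_leftJustStart_iff] at hv ⊢
  simpa only [List.filter_append σ, filter_append_cons_eq_filter_cons_append hK] using hv

end Lanes

theorem stmt4_general (A B : List Platoon) (hA : LaneOK A) (hB : LaneOK B)
    (d t : ℝ) (σP σR : List (Bool × Platoon))
    (bi : Bool) (ri li rj lj : ℝ)
    (hvalid : ValidSeq A B (leftJustStart (σP ++ σR)))
    (hdelay : ∀ e ∈ leftJustStart (σP ++ σR), e.2.2 - e.2.1.1 ≤ d)
    (ht : ∀ e ∈ (leftJustStart (σP ++ σR)).take σP.length, e.2.2 + e.2.1.2 ≤ t)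
    (hpi : (σR.filter (fun e => e.1 == bi)).head? = some (bi, (ri, li)))
    (hrij : ri ≤ rj)
    (hd : max t ri + li - rj ≤ d)
    (hfirst : σR.head? = some (!bi, (rj, lj))) :
    ValidSeq A B (leftJustStart (σP ++ (bi, (ri, li)) :: σR.erase (bi, (ri, li)))) ∧
    ∀ e ∈ leftJustStart (σP ++ (bi, (ri, li)) :: σR.erase (bi, (ri, li))),
      e.2.2 - e.2.1.1 ≤ d := by
  rw [List.head?_filter, List.find?_eq_some_iff_append] at hpi
  obtain ⟨-, K, N, rfl, hK⟩ := hpi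
  obtain ⟨M, rfl⟩ : ∃ M, K = (!bi, (rj, lj)) :: M := by
    cases K with
    | nil => cases bi <;> simp at hfirst
    | cons x M => exact ⟨M, by simpa using hfirst⟩
  have hK_lane : ∀ x ∈ (!bi, (rj, lj)) :: M, x.1 = !bi := fun x hx =>
    Bool.eq_not.mpr (by simpa using hK x hx)
  rw [List.erase_append_right _ (fun h => by simpa using hK _ h), List.erase_cons_head]
  refine ⟨validSeq_leftJustStart_moveFront hvalid fun x hx => by simp [hK_lane x hx], ?_⟩
  have hlanes := laneOK_filter_of_validSeq hvalid hA hB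
  obtain ⟨s, hs, hsplit⟩ := exists_leftJustStart_append σP ri
  rw [hsplit _ (by simpa using hrij)] at hdelay ht
  rw [List.take_left' (length_leftJust _ _)] at ht
  have hT : leftJustEnd s σP ≤ max t ri := calc
    leftJustEnd s σP ≤ max s t := leftJustEnd_le_max ht
    _ ≤ max t ri := max_le (hs.trans (le_max_right t ri)) (le_max_left t ri)
  rw [hsplit _ (by simp)]
  refine delayBounded_append.mpr ⟨(delayBounded_append.mp hdelay).1,
    delayBounded_leftJust_moveFront (fun z hz => ?_) ?_
      ((hlanes (!bi)).isChain_of_infix ?_ hK_lane) hrij ?_ (delayBounded_append.mp hdelay).2⟩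
  · exact ((hlanes (!bi)).length_pos_of_mem
      (List.mem_append_right _ (List.mem_append_left _ hz)) (hK_lane z hz)).le
  · exact ((hlanes bi).length_pos_of_mem (by simp) rfl).le
  · exact List.infix_append' _ _ _
  · linarith [max_le hT (le_max_right t ri)]

/-- Exchange step for the Y-merge greedy algorithm.  `S` is the left-justified
valid schedule, with delay at most `d`, of a crossing order `σP ++ σR`, where the
platoons of the prefix `σP` (an initial segment of each lane) all finish by time
`t`.  Among the remaining platoons `σR`, `pᵢ = (ri, li)` is the first one on lane
`bi` and `pⱼ = (rj, lj)` is the first one on the other lane, with `ri ≤ rj` and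
`max t ri + li - rj ≤ d`, but in `S` platoon `pⱼ` crosses before `pᵢ`.  Then the
left-justified schedule of the order obtained by moving `pᵢ` to cross immediately
after `σP` (keeping all other platoons in the same relative order) is also valid
with delay at most `d`. -/
theorem stmt4 (A B : List Platoon) (hA : LaneOK A) (hB : LaneOK B)
    (d t : ℝ) (σP σR : List (Bool × Platoon))
    (bi : Bool) (ri li rj lj : ℝ)
    (hvalid : ValidSeq A B (leftJustStart (σP ++ σR)))
    (hdelay : ∀ e ∈ leftJustStart (σP ++ σR), e.2.2 - e.2.1.1 ≤ d)
    (ht : ∀ e ∈ (leftJustStart (σP ++ σR)).take σP.length, e.2.2 + e.2.1.2 ≤ t)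
    (hpi : (σR.filter (fun e => e.1 == bi)).head? = some (bi, (ri, li)))
    (hpj : (σR.filter (fun e => e.1 == !bi)).head? = some (!bi, (rj, lj)))
    (hrij : ri ≤ rj)
    (hd : max t ri + li - rj ≤ d)
    (hfirst : σR.head? = some (!bi, (rj, lj))) :
    ValidSeq A B (leftJustStart (σP ++ (bi, (ri, li)) :: σR.erase (bi, (ri, li)))) ∧
    ∀ e ∈ leftJustStart (σP ++ (bi, (ri, li)) :: σR.erase (bi, (ri, li))),
      e.2.2 - e.2.1.1 ≤ d :=
  stmt4_general A B hA hB d t σP σR bi ri li rj lj hvalid hdelay ht hpi hrij hd hfirst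
end

section
/- Single-lane greedy delay formula: consider m platoons on a single lane with release times r_1 < r_2 < ⋯ < r_m, lengths ℓ_1, …, ℓ_m > 0 satisfying r_j + ℓ_j ≤ r_{j+1} for all j, and gaps g_j = r_{j+1} − (r_j + ℓ_j) ≥ 0. For a start time t, define the greedy crossing times c_1 = max(t, r_1) and c_{j+1} = max(c_j + ℓ_j, r_{j+1}). Then for every j, the delay of platoon j satisfies c_j − r_j = max(0, d_1 − Σ_{1 ≤ i < j} g_i), where d_1 = max(0, t − r_1) is the delay of the first platoon; in particular every platoon's delay is at most d_1 (the first platoon is the most heavily delayed). -/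
/-!
The delay `d j = c j - r j` obeys the Lindley recursion `d (j+1) = max 0 (d j - g j)`: platoon
`j + 1` arrives `g j` after platoon `j` leaves, so it inherits the part of the delay that the gap
does not absorb. Since `max 0 (max 0 x - a) = max 0 (x - a)` for `a ≥ 0`, the recursion unrolls to
`d j = max 0 (d 0 - ∑_{i<j} g i)`, which is at most `d 0` because the gaps are nonnegative.
-/

open Finset

lemma max_zero_sub_max_zero {x a : ℝ} (ha : 0 ≤ a) : max 0 (max 0 x - a) = max 0 (x - a) := by
  rcases le_total x 0 with hx | hx
  · rw [max_eq_left hx, max_eq_left (by linarith), max_eq_left (by linarith)]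
  · rw [max_eq_right hx]

theorem lindley_eq_max_zero_sub_sum {m : ℕ} {d g : ℕ → ℝ} (hd0 : 0 ≤ d 0)
    (hg : ∀ j, j + 1 < m → 0 ≤ g j)
    (hd : ∀ j, j + 1 < m → d (j + 1) = max 0 (d j - g j)) :
    ∀ j < m, d j = max 0 (d 0 - ∑ i ∈ range j, g i) := by
  intro j hj
  induction j with
  | zero => simp [hd0]
  | succ j ih =>
    rw [hd j hj, ih (by omega), max_zero_sub_max_zero (hg j hj), sum_range_succ, sub_sub]

theorem stmt7_general (m : ℕ) (r l : ℕ → ℝ) (t : ℝ)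
    (hsep : ∀ j, j + 1 < m → r j + l j ≤ r (j + 1))
    (c : ℕ → ℝ)
    (hc0 : c 0 = max t (r 0))
    (hcs : ∀ j, j + 1 < m → c (j + 1) = max (c j + l j) (r (j + 1)))
    (g : ℕ → ℝ)
    (hg : ∀ j, g j = r (j + 1) - (r j + l j)) :
    ∀ j < m, c j - r j = max 0 (max 0 (t - r 0) - ∑ i ∈ Finset.range j, g i) ∧
      c j - r j ≤ max 0 (t - r 0) := by
  have hgap : ∀ j, j + 1 < m → 0 ≤ g j := fun j hj => by linarith [hg j, hsep j hj]
  have hdelay0 : c 0 - r 0 = max 0 (t - r 0) := by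
    rw [hc0, ← max_sub_sub_right, sub_self, max_comm]
  have hstep : ∀ j, j + 1 < m → c (j + 1) - r (j + 1) = max 0 (c j - r j - g j) := by
    intro j hj
    rw [hcs j hj, ← max_sub_sub_right, sub_self, max_comm, hg j]
    ring_nf
  intro j hj
  have hdelay := lindley_eq_max_zero_sub_sum (d := fun j => c j - r j)
    (hdelay0 ▸ le_max_left _ _) hgap hstep j hj
  rw [hdelay0] at hdelay
  have hsum : 0 ≤ ∑ i ∈ range j, g i := sum_nonneg fun i hi => hgap i (by simp at hi; omega)
  exact ⟨hdelay, hdelay ▸ max_le (le_max_left _ _) (by linarith)⟩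

/-- Single-lane greedy delay formula.  `m` platoons on one lane have release times
`r 0 < r 1 < ⋯ < r (m-1)`, positive lengths `l j`, and disjoint release ranges
`r j + l j ≤ r (j+1)`, with gaps `g j = r (j+1) - (r j + l j) ≥ 0`.  Starting at
time `t`, the greedy crossing times are `c 0 = max t (r 0)` and
`c (j+1) = max (c j + l j) (r (j+1))`.  Then the delay of platoon `j` is
`c j - r j = max 0 (d₁ - Σ_{i<j} g i)` where `d₁ = max 0 (t - r 0)` is the delay
of the first platoon; in particular every platoon's delay is at most `d₁`. -/
theorem stmt7 (m : ℕ) (r l : ℕ → ℝ) (t : ℝ)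
    (hl : ∀ j < m, 0 < l j)
    (hsep : ∀ j, j + 1 < m → r j + l j ≤ r (j + 1))
    (c : ℕ → ℝ)
    (hc0 : c 0 = max t (r 0))
    (hcs : ∀ j, j + 1 < m → c (j + 1) = max (c j + l j) (r (j + 1)))
    (g : ℕ → ℝ)
    (hg : ∀ j, g j = r (j + 1) - (r j + l j)) :
    ∀ j < m, c j - r j = max 0 (max 0 (t - r 0) - ∑ i ∈ Finset.range j, g i) ∧
      c j - r j ≤ max 0 (t - r 0) :=
  stmt7_general m r l t hsep c hc0 hcs g hg
end

section
/- If there is a partition of the index set {1, …, ℓ} into sets U and V with Σ_{i ∈ U} x_i = Σ_{i ∈ V} x_i = q, then the associated MULTI-CROSS instance admits a valid schedule with delay at most 2q + 1. -/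
/-- Lanes of the MULTI-CROSS instance built from `x 1, …, x l` with sum `2 * q`:
lane `a` is `0`, lane `b` is `1`, and the merge lanes `m_1, …, m_{l+1}` are
`2, …, l + 2`.  Platoon `0` (the long platoon `p₁`) is on lane `a`; platoon `1`
(the short platoon `p₂`) is on lane `b`; platoon `2` (the long platoon `p₃`) is
on merge lane `m_{l+1}`; and for `1 ≤ i ≤ l`, platoon `2 + i` (which is
`p_{3+i}`) is on merge lane `m_i`. -/
def mcLane (l : ℕ) (i : Fin (l + 3)) : ℕ :=
  if (i : ℕ) = 0 then 0
  else if (i : ℕ) = 1 then 1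
  else if (i : ℕ) = 2 then l + 2
  else (i : ℕ) - 1

/-- Release times: `p₁` is released at `0`, `p₂` at `2q`, and all merge-lane
platoons at `q`. -/
noncomputable def mcR (q : ℕ) {l : ℕ} (i : Fin (l + 3)) : ℝ :=
  if (i : ℕ) = 0 then 0
  else if (i : ℕ) = 1 then 2 * q
  else q

/-- Lengths: `p₁` and `p₃` have length `4(q+1)`, `p₂` has length `1`, and
`p_{3+i}` has length `x i`. -/
noncomputable def mcLen (q : ℕ) (x : ℕ → ℕ) {l : ℕ} (i : Fin (l + 3)) : ℝ :=
  if (i : ℕ) = 0 then 4 * (q + 1)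
  else if (i : ℕ) = 1 then 1
  else if (i : ℕ) = 2 then 4 * (q + 1)
  else x ((i : ℕ) - 2)

/-- Two platoons are incompatible exactly when they lie on two distinct merge
lanes, or when one of them is `p₂` (the platoon on lane `b` is incompatible with
every other platoon); `p₁` on lane `a` is compatible with all merge-lane
platoons. -/
def mcIncompat (l : ℕ) (i j : Fin (l + 3)) : Prop :=
  i ≠ j ∧ ((i : ℕ) = 1 ∨ (j : ℕ) = 1 ∨
    (2 ≤ (i : ℕ) ∧ 2 ≤ (j : ℕ) ∧ mcLane l i ≠ mcLane l j))

/-- A valid schedule for the MULTI-CROSS instance: each platoon crosses no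
earlier than its release time; platoons on the same lane cross in release order,
one finishing before the next crosses; and the open crossing intervals of
incompatible platoons are disjoint. -/
def mcValid (l q : ℕ) (x : ℕ → ℕ) (c : Fin (l + 3) → ℝ) : Prop :=
  (∀ i, mcR q i ≤ c i) ∧
  (∀ i j, i ≠ j → mcLane l i = mcLane l j →
    mcR q i + mcLen q x i ≤ mcR q j → c i + mcLen q x i ≤ c j) ∧
  (∀ i j, mcIncompat l i j →
    Disjoint (Set.Ioo (c i) (c i + mcLen q x i))
             (Set.Ioo (c j) (c j + mcLen q x j)))

/-!
The intersection is used in four consecutive phases: the merge platoons indexed by `U` cross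
back to back during `[q, 2q]`, then `p₂` during `[2q, 2q + 1]`, then the merge platoons indexed
by `V` back to back during `[2q + 1, 3q + 1]`, then `p₃`. The long platoon `p₁` conflicts only
with `p₂`, so it crosses at `2q + 1`, alongside the `V`-platoons and `p₃`. Every merge platoon is
released at `q` and has crossed by `3q + 1`, so no platoon waits more than `2q + 1`.
-/

section PrefixSum

variable {α M : Type*} [LinearOrder α] [AddCommMonoid M] {S : Finset α} {w : α → M} {i j : α}

def prefixSum (S : Finset α) (w : α → M) (a : α) : M := ∑ k ∈ S with k < a, w k

lemma prefixSum_add_eq_sum_le (hi : i ∈ S) :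
    prefixSum S w i + w i = ∑ k ∈ S with k ≤ i, w k := by
  have : {k ∈ S | k ≤ i} = insert i {k ∈ S | k < i} := by
    ext k
    simp only [Finset.mem_filter, Finset.mem_insert, le_iff_lt_or_eq]
    constructor
    · rintro ⟨hk, hlt | rfl⟩ <;> simp_all
    · rintro (rfl | ⟨hk, hlt⟩) <;> simp_all
  rw [this, Finset.sum_insert (by simp), add_comm, prefixSum]

variable [PartialOrder M] [IsOrderedAddMonoid M]

lemma prefixSum_add_le_prefixSum (hw : ∀ k ∈ S, 0 ≤ w k) (hi : i ∈ S) (hij : i < j) :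
    prefixSum S w i + w i ≤ prefixSum S w j := by
  rw [prefixSum_add_eq_sum_le hi, prefixSum]
  refine Finset.sum_le_sum_of_subset_of_nonneg (fun k hk => ?_)
    fun k hk _ => hw k (Finset.mem_filter.1 hk).1
  rw [Finset.mem_filter] at hk ⊢
  exact ⟨hk.1, hk.2.trans_lt hij⟩

lemma prefixSum_add_le_sum (hw : ∀ k ∈ S, 0 ≤ w k) (hi : i ∈ S) :
    prefixSum S w i + w i ≤ ∑ k ∈ S, w k := by
  rw [prefixSum_add_eq_sum_le hi]
  exact Finset.sum_le_sum_of_subset_of_nonneg (Finset.filter_subset _ S) fun k hk _ => hw k hk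

lemma prefixSum_separated (hw : ∀ k ∈ S, 0 ≤ w k) (hi : i ∈ S) (hj : j ∈ S) (hij : i ≠ j) :
    prefixSum S w i + w i ≤ prefixSum S w j ∨ prefixSum S w j + w j ≤ prefixSum S w i :=
  hij.lt_or_gt.imp (prefixSum_add_le_prefixSum hw hi) (prefixSum_add_le_prefixSum hw hj)

end PrefixSum

section Schedule

variable (q : ℕ) (x : ℕ → ℕ) (U V : Finset ℕ)

noncomputable def mergeStart (a : ℕ) : ℝ :=
  if a ∈ U then q + prefixSum U x a else 2 * q + 1 + prefixSum V x a

noncomputable def mcSchedule {l : ℕ} (i : Fin (l + 3)) : ℝ :=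
  if (i : ℕ) = 0 then 2 * q + 1
  else if (i : ℕ) = 1 then 2 * q
  else if (i : ℕ) = 2 then 3 * q + 1
  else mergeStart q x U V ((i : ℕ) - 2)

variable {q x U V} {a b : ℕ}

lemma mergeStart_window_of_mem (hU : ∑ k ∈ U, x k ≤ q) (haU : a ∈ U) :
    (q : ℝ) ≤ mergeStart q x U V a ∧ mergeStart q x U V a + x a ≤ 2 * q := by
  have hfit : (prefixSum U x a + x a : ℝ) ≤ q := by
    exact_mod_cast (prefixSum_add_le_sum (fun _ _ => Nat.zero_le _) haU).trans hU
  rw [mergeStart, if_pos haU]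
  constructor <;> linarith [(prefixSum U x a).cast_nonneg (α := ℝ)]

lemma mergeStart_window_of_not_mem (hV : ∑ k ∈ V, x k ≤ q) (ha : a ∈ U ∪ V) (haU : a ∉ U) :
    2 * (q : ℝ) + 1 ≤ mergeStart q x U V a ∧ mergeStart q x U V a + x a ≤ 3 * q + 1 := by
  have haV : a ∈ V := (Finset.mem_union.1 ha).resolve_left haU
  have hfit : (prefixSum V x a + x a : ℝ) ≤ q := by
    exact_mod_cast (prefixSum_add_le_sum (fun _ _ => Nat.zero_le _) haV).trans hV
  rw [mergeStart, if_neg haU]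
  constructor <;> linarith [(prefixSum V x a).cast_nonneg (α := ℝ)]

lemma mergeStart_window (hU : ∑ k ∈ U, x k ≤ q) (hV : ∑ k ∈ V, x k ≤ q) (ha : a ∈ U ∪ V) :
    (q : ℝ) ≤ mergeStart q x U V a ∧ mergeStart q x U V a + x a ≤ 3 * q + 1 := by
  by_cases haU : a ∈ U
  · have := mergeStart_window_of_mem (V := V) hU haU
    constructor <;> linarith
  · have := mergeStart_window_of_not_mem hV ha haU
    constructor <;> linarith

lemma mergeStart_separated (hU : ∑ k ∈ U, x k ≤ q) (hV : ∑ k ∈ V, x k ≤ q)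
    (ha : a ∈ U ∪ V) (hb : b ∈ U ∪ V) (hab : a ≠ b) :
    mergeStart q x U V a + x a ≤ mergeStart q x U V b ∨
      mergeStart q x U V b + x b ≤ mergeStart q x U V a := by
  by_cases haU : a ∈ U <;> by_cases hbU : b ∈ U
  · simp only [mergeStart, if_pos haU, if_pos hbU, add_assoc, add_le_add_iff_left]
    exact_mod_cast prefixSum_separated (fun _ _ => Nat.zero_le _) haU hbU hab
  · left; linarith [(mergeStart_window_of_mem (V := V) hU haU).2,
      (mergeStart_window_of_not_mem hV hb hbU).1]
  · right; linarith [(mergeStart_window_of_mem (V := V) hU hbU).2,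
      (mergeStart_window_of_not_mem hV ha haU).1]
  · have haV := (Finset.mem_union.1 ha).resolve_left haU
    have hbV := (Finset.mem_union.1 hb).resolve_left hbU
    simp only [mergeStart, if_neg haU, if_neg hbU, add_assoc, add_le_add_iff_left]
    exact_mod_cast prefixSum_separated (fun _ _ => Nat.zero_le _) haV hbV hab

end Schedule

section Platoons

variable {q : ℕ} {x : ℕ → ℕ} {U V : Finset ℕ} {l : ℕ} {i j : Fin (l + 3)}

lemma mcLane_injective : Function.Injective (mcLane l) := by
  intro i j h
  have := i.isLt
  have := j.isLt
  unfold mcLane at h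
  apply Fin.ext
  split_ifs at h <;> omega

lemma mcIncompat_symm (h : mcIncompat l i j) : mcIncompat l j i := by
  obtain ⟨hne, h1 | h1 | ⟨hi, hj, hlane⟩⟩ := h
  exacts [⟨hne.symm, .inr (.inl h1)⟩, ⟨hne.symm, .inl h1⟩,
    ⟨hne.symm, .inr (.inr ⟨hj, hi, hlane.symm⟩)⟩]

lemma sub_two_mem_Icc (hi : 3 ≤ (i : ℕ)) : (i : ℕ) - 2 ∈ Finset.Icc 1 l :=
  Finset.mem_Icc.2 ⟨by omega, by omega⟩

lemma mcR_of_three_le (hi : 3 ≤ (i : ℕ)) : mcR q i = q := by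
  rw [mcR, if_neg (by omega), if_neg (by omega)]

lemma mcLen_of_three_le (hi : 3 ≤ (i : ℕ)) : mcLen q x i = x ((i : ℕ) - 2) := by
  rw [mcLen, if_neg (by omega), if_neg (by omega), if_neg (by omega)]

lemma mcSchedule_of_three_le (hi : 3 ≤ (i : ℕ)) :
    mcSchedule q x U V i = mergeStart q x U V ((i : ℕ) - 2) := by
  rw [mcSchedule, if_neg (by omega), if_neg (by omega), if_neg (by omega)]

lemma mcSchedule_delay (hU : ∑ k ∈ U, x k ≤ q) (hV : ∑ k ∈ V, x k ≤ q)
    (hUV : Finset.Icc 1 l ⊆ U ∪ V) (i : Fin (l + 3)) :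
    mcR q i ≤ mcSchedule q x U V i ∧ mcSchedule q x U V i - mcR q i ≤ 2 * q + 1 := by
  rcases (by omega : (i : ℕ) = 0 ∨ (i : ℕ) = 1 ∨ (i : ℕ) = 2 ∨ 3 ≤ (i : ℕ))
    with hi | hi | hi | hi
  · norm_num [mcSchedule, mcR, hi]; positivity
  · norm_num [mcSchedule, mcR, hi]; positivity
  · norm_num [mcSchedule, mcR, hi]; constructor <;> linarith [q.cast_nonneg (α := ℝ)]
  · rw [mcR_of_three_le hi, mcSchedule_of_three_le hi]
    have := mergeStart_window hU hV (hUV (sub_two_mem_Icc hi))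
    constructor <;> linarith [(x ((i : ℕ) - 2)).cast_nonneg (α := ℝ)]

lemma mcSchedule_separated (hU : ∑ k ∈ U, x k ≤ q) (hV : ∑ k ∈ V, x k ≤ q)
    (hUV : Finset.Icc 1 l ⊆ U ∪ V) (hij : mcIncompat l i j) :
    mcSchedule q x U V i + mcLen q x i ≤ mcSchedule q x U V j ∨
      mcSchedule q x U V j + mcLen q x j ≤ mcSchedule q x U V i := by
  wlog hlt : (i : ℕ) < j generalizing i j
  · have hne : (i : ℕ) ≠ j := fun h => hij.1 (Fin.ext h)
    exact (this (mcIncompat_symm hij) (by omega)).symm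
  have hq : (0 : ℝ) ≤ q := q.cast_nonneg
  obtain ⟨-, hij⟩ := hij
  rcases (by omega : (i : ℕ) = 0 ∨ (i : ℕ) = 1 ∨ (i : ℕ) = 2 ∨ 3 ≤ (i : ℕ))
    with hi | hi | hi | hi
  · have hj : (j : ℕ) = 1 := by omega
    right
    norm_num [mcSchedule, mcLen, hi, hj]
  · have hci : mcSchedule q x U V i + mcLen q x i = 2 * q + 1 := by
      norm_num [mcSchedule, mcLen, hi]
    rcases (by omega : (j : ℕ) = 2 ∨ 3 ≤ (j : ℕ)) with hj | hj
    · left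
      rw [hci]
      norm_num [mcSchedule, hj]
      linarith
    · rw [mcSchedule_of_three_le hj, mcLen_of_three_le hj]
      by_cases hjU : (j : ℕ) - 2 ∈ U
      · right
        norm_num [mcSchedule, hi]
        linarith [(mergeStart_window_of_mem (V := V) hU hjU).2]
      · left
        linarith [(mergeStart_window_of_not_mem hV (hUV (sub_two_mem_Icc hj)) hjU).1]
  · have hj : 3 ≤ (j : ℕ) := by omega
    right
    rw [mcSchedule_of_three_le hj, mcLen_of_three_le hj]
    norm_num [mcSchedule, hi]
    linarith [(mergeStart_window hU hV (hUV (sub_two_mem_Icc hj))).2]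
  · have hj : 3 ≤ (j : ℕ) := by omega
    rw [mcSchedule_of_three_le hi, mcLen_of_three_le hi, mcSchedule_of_three_le hj,
      mcLen_of_three_le hj]
    exact mergeStart_separated hU hV (hUV (sub_two_mem_Icc hi)) (hUV (sub_two_mem_Icc hj))
      (by omega)

end Platoons

theorem stmt11_general (l q : ℕ) (x : ℕ → ℕ)
    (U V : Finset ℕ) (hUV : U ∪ V = Finset.Icc 1 l)
    (hU : ∑ i ∈ U, x i = q) (hV : ∑ i ∈ V, x i = q) :
    ∃ c : Fin (l + 3) → ℝ, mcValid l q x c ∧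
      ∀ i, c i - mcR q i ≤ 2 * (q : ℝ) + 1 := by
  have hdelay := mcSchedule_delay (U := U) (V := V) hU.le hV.le hUV.ge
  refine ⟨mcSchedule q x U V, ⟨fun i => (hdelay i).1, ?_, fun i j hij => ?_⟩,
    fun i => (hdelay i).2⟩
  · intro i j hne hlane _
    exact absurd (mcLane_injective hlane) hne
  · rcases mcSchedule_separated hU.le hV.le hUV.ge hij with h | h
    · exact Set.Ioo_disjoint_Ioo.2 <| (min_le_left _ _).trans <| h.trans <| le_max_right _ _
    · exact Set.Ioo_disjoint_Ioo.2 <| (min_le_right _ _).trans <| h.trans <| le_max_left _ _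

/-- If the index set `{1, …, l}` can be partitioned into `U` and `V` with
`Σ_{i ∈ U} x i = Σ_{i ∈ V} x i = q`, then the associated MULTI-CROSS instance
admits a valid schedule with delay at most `2q + 1`. -/
theorem stmt11 (l q : ℕ) (x : ℕ → ℕ) (hq : 0 < q)
    (hx : ∀ i, 1 ≤ i → i ≤ l → 0 < x i)
    (hsum : ∑ i ∈ Finset.Icc 1 l, x i = 2 * q)
    (U V : Finset ℕ) (hUV : U ∪ V = Finset.Icc 1 l) (hdisj : Disjoint U V)
    (hU : ∑ i ∈ U, x i = q) (hV : ∑ i ∈ V, x i = q) :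
    ∃ c : Fin (l + 3) → ℝ, mcValid l q x c ∧
      ∀ i, c i - mcR q i ≤ 2 * (q : ℝ) + 1 :=
  stmt11_general l q x U V hUV hU hV
end

section
/- If the associated MULTI-CROSS instance admits a valid schedule with delay at most 2q + 1, then there is a partition of the index set {1, …, ℓ} into sets U and V with Σ_{i ∈ U} x_i = Σ_{i ∈ V} x_i = q. -/
/-! The platoon `p₂` must cross exactly at its release time `2q`, which splits the window
`[q, 3q + 1]` available to the merge platoons at `2q`; the long platoon `p₃` blocks
everything after `3q + 1`. Every merge platoon then crosses entirely inside `[q, 2q]` or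
inside `[2q + 1, 3q + 1]`, and disjoint crossing intervals inside a window of length `q`
have total length at most `q`. Since the lengths add up to `2q`, both sides sum to `q`. -/

open Set

theorem Set.le_or_le_of_disjoint_Ioo {α : Type*} [LinearOrder α] [DenselyOrdered α]
    {a b a' b' : α} (h : Disjoint (Ioo a b) (Ioo a' b')) :
    b ≤ a ∨ b' ≤ a' ∨ b ≤ a' ∨ b' ≤ a := by
  rw [Ioo_disjoint_Ioo, min_le_iff, le_max_iff, le_max_iff] at h
  tauto

theorem sum_le_of_pairwiseDisjoint_Ioo_subset_Icc {ι : Type*} {s : Finset ι}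
    {c len : ι → ℝ} {a b : ℝ} (hab : a ≤ b) (hlen : ∀ i ∈ s, 0 ≤ len i)
    (hdisj : (s : Set ι).PairwiseDisjoint fun i => Ioo (c i) (c i + len i))
    (hsub : ∀ i ∈ s, Ioo (c i) (c i + len i) ⊆ Icc a b) :
    ∑ i ∈ s, len i ≤ b - a := by
  have hvol : ENNReal.ofReal (∑ i ∈ s, len i) ≤ ENNReal.ofReal (b - a) := by
    calc ENNReal.ofReal (∑ i ∈ s, len i)
        = MeasureTheory.volume (⋃ i ∈ s, Ioo (c i) (c i + len i)) := by
          rw [MeasureTheory.measure_biUnion_finset hdisj fun i _ => measurableSet_Ioo,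
            ENNReal.ofReal_sum_of_nonneg hlen]
          simp only [Real.volume_Ioo, add_sub_cancel_left]
      _ ≤ MeasureTheory.volume (Icc a b) := MeasureTheory.measure_mono (iUnion₂_subset hsub)
      _ = ENNReal.ofReal (b - a) := Real.volume_Icc
  exact (ENNReal.ofReal_le_ofReal_iff (sub_nonneg.mpr hab)).mp hvol

/-- Platoon `p_{3+i}` on merge lane `m_i`, for `1 ≤ i ≤ l` (other `i` wrap around). -/
def mcMerge (l i : ℕ) : Fin (l + 3) := Fin.ofNat (l + 3) (i + 2)

section Instance

variable {l q : ℕ} {x : ℕ → ℕ} {i j : ℕ}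

@[simp] theorem Nat.two_mod_add_three : 2 % (l + 3) = 2 := Nat.mod_eq_of_lt (by omega)

theorem mcMerge_val (hi : i ≤ l) : (mcMerge l i : ℕ) = i + 2 := by
  rw [mcMerge, Fin.val_ofNat, Nat.mod_eq_of_lt (by omega)]

@[simp] theorem mcR_zero : mcR q (0 : Fin (l + 3)) = 0 := by simp [mcR]

@[simp] theorem mcR_one : mcR q (1 : Fin (l + 3)) = 2 * q := by simp [mcR]

@[simp] theorem mcR_two : mcR q (2 : Fin (l + 3)) = q := by simp [mcR]

theorem mcR_mcMerge (hi : i ≤ l) : mcR q (mcMerge l i) = q := by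
  simp [mcR, mcMerge_val hi]

@[simp] theorem mcLen_zero : mcLen q x (0 : Fin (l + 3)) = 4 * (q + 1) := by simp [mcLen]

@[simp] theorem mcLen_one : mcLen q x (1 : Fin (l + 3)) = 1 := by simp [mcLen]

@[simp] theorem mcLen_two : mcLen q x (2 : Fin (l + 3)) = 4 * (q + 1) := by simp [mcLen]

theorem mcLen_mcMerge (hi : 1 ≤ i) (hil : i ≤ l) : mcLen q x (mcMerge l i) = x i := by
  simp only [mcLen, mcMerge_val hil]
  rw [if_neg (by omega), if_neg (by omega), if_neg (by omega), Nat.add_sub_cancel]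

theorem mcLane_mcMerge (hi : 1 ≤ i) (hil : i ≤ l) : mcLane l (mcMerge l i) = i + 1 := by
  simp only [mcLane, mcMerge_val hil]
  rw [if_neg (by omega), if_neg (by omega), if_neg (by omega)]
  omega

theorem mcIncompat_one {j : Fin (l + 3)} (hj : (j : ℕ) ≠ 1) : mcIncompat l 1 j :=
  ⟨fun h => hj (by simp [← h]), Or.inl (by simp)⟩

theorem mcIncompat_two_mcMerge (hi : 1 ≤ i) (hil : i ≤ l) : mcIncompat l 2 (mcMerge l i) := by
  refine ⟨fun h => ?_, Or.inr (Or.inr ⟨by simp, by rw [mcMerge_val hil]; omega, ?_⟩)⟩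
  · have : 2 = i + 2 := by rw [← mcMerge_val hil, ← h]; rfl
    omega
  · rw [mcLane_mcMerge hi hil]
    show l + 2 ≠ i + 1
    omega

theorem mcIncompat_mcMerge (hi : 1 ≤ i) (hil : i ≤ l) (hj : 1 ≤ j) (hjl : j ≤ l) (hij : i ≠ j) :
    mcIncompat l (mcMerge l i) (mcMerge l j) := by
  refine ⟨fun h => hij ?_, Or.inr (Or.inr ⟨?_, ?_, ?_⟩)⟩
  · have := congrArg Fin.val h
    rw [mcMerge_val hil, mcMerge_val hjl] at this
    omega
  · rw [mcMerge_val hil]; omega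
  · rw [mcMerge_val hjl]; omega
  · rw [mcLane_mcMerge hi hil, mcLane_mcMerge hj hjl]; omega

end Instance

section Schedule

variable {l q : ℕ} {x : ℕ → ℕ} {c : Fin (l + 3) → ℝ} {i : ℕ}

def mcMergeInterval (c : Fin (l + 3) → ℝ) (x : ℕ → ℕ) (i : ℕ) : Set ℝ :=
  Ioo (c (mcMerge l i)) (c (mcMerge l i) + x i)

theorem mcValid.crossing_one_eq (hc : mcValid l q x c)
    (hd : ∀ i, c i - mcR q i ≤ 2 * (q : ℝ) + 1) : c 1 = 2 * q := by
  have h0 := hc.1 0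
  have h1 := hc.1 1
  have hd0 := hd 0
  have hd1 := hd 1
  have h01 := Set.le_or_le_of_disjoint_Ioo (hc.2.2 1 0 (mcIncompat_one (by simp)))
  simp only [mcR_zero, mcR_one, mcLen_zero, mcLen_one] at h0 h1 hd0 hd1 h01
  rcases h01 with h | h | h | h <;> linarith

theorem mcValid.crossing_two_ge (hc : mcValid l q x c)
    (hd : ∀ i, c i - mcR q i ≤ 2 * (q : ℝ) + 1) : 2 * q + 1 ≤ c 2 := by
  have h2 := hc.1 2
  have h12 := Set.le_or_le_of_disjoint_Ioo (hc.2.2 1 2 (mcIncompat_one (by simp)))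
  simp only [mcR_two, mcLen_one, mcLen_two, hc.crossing_one_eq hd] at h2 h12
  rcases h12 with h | h | h | h <;> linarith

theorem mcValid.crossing_mcMerge_add_le (hc : mcValid l q x c)
    (hd : ∀ i, c i - mcR q i ≤ 2 * (q : ℝ) + 1) (hi : 1 ≤ i) (hil : i ≤ l) :
    c (mcMerge l i) + x i ≤ 3 * q + 1 := by
  have h2 := hc.crossing_two_ge hd
  have hd2 := hd 2
  have hdi := hd (mcMerge l i)
  have h2i := Set.le_or_le_of_disjoint_Ioo (hc.2.2 _ _ (mcIncompat_two_mcMerge hi hil))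
  simp only [mcR_two, mcLen_two, mcR_mcMerge hil, mcLen_mcMerge hi hil] at hd2 hdi h2i
  rcases h2i with h | h | h | h <;> linarith

theorem mcValid.pairwiseDisjoint_mcMergeInterval (hc : mcValid l q x c) :
    ((Finset.Icc 1 l : Finset ℕ) : Set ℕ).PairwiseDisjoint (mcMergeInterval c x) := by
  intro i hi j hj hij
  simp only [Finset.coe_Icc, mem_Icc] at hi hj
  have h := hc.2.2 _ _ (mcIncompat_mcMerge hi.1 hi.2 hj.1 hj.2 hij)
  rwa [mcLen_mcMerge hi.1 hi.2, mcLen_mcMerge hj.1 hj.2] at h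

theorem mcValid.mcMergeInterval_subset (hc : mcValid l q x c)
    (hd : ∀ i, c i - mcR q i ≤ 2 * (q : ℝ) + 1) (hi : 1 ≤ i) (hil : i ≤ l) :
    mcMergeInterval c x i ⊆ Icc q (q + q) ∨
      mcMergeInterval c x i ⊆ Icc (2 * q + 1) (2 * q + 1 + q) := by
  have hr := hc.1 (mcMerge l i)
  have hend := hc.crossing_mcMerge_add_le hd hi hil
  have h1i := Set.le_or_le_of_disjoint_Ioo
    (hc.2.2 _ _ (mcIncompat_one (j := mcMerge l i) (by rw [mcMerge_val hil]; omega)))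
  simp only [mcR_mcMerge hil, mcLen_one, mcLen_mcMerge hi hil, hc.crossing_one_eq hd] at hr h1i
  unfold mcMergeInterval
  rcases h1i with h | h | h | h
  · linarith
  · simp [Ioo_eq_empty (not_lt.mpr h)]
  · exact Or.inr (Ioo_subset_Icc_self.trans (Icc_subset_Icc h (by linarith)))
  · exact Or.inl (Ioo_subset_Icc_self.trans (Icc_subset_Icc hr (by linarith)))

theorem mcValid.sum_le (hc : mcValid l q x c) {s : Finset ℕ} (hs : s ⊆ Finset.Icc 1 l)
    {a : ℝ} {k : ℕ} (hsub : ∀ i ∈ s, mcMergeInterval c x i ⊆ Icc a (a + k)) :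
    ∑ i ∈ s, x i ≤ k := by
  have := sum_le_of_pairwiseDisjoint_Ioo_subset_Icc (le_add_of_nonneg_right k.cast_nonneg)
    (fun _ _ => Nat.cast_nonneg _)
    (hc.pairwiseDisjoint_mcMergeInterval.subset (Finset.coe_subset.mpr hs)) hsub
  exact_mod_cast (by linarith : ∑ i ∈ s, (x i : ℝ) ≤ k)

end Schedule

theorem stmt12_general (l q : ℕ) (x : ℕ → ℕ)
    (hsum : ∑ i ∈ Finset.Icc 1 l, x i = 2 * q)
    (h : ∃ c : Fin (l + 3) → ℝ, mcValid l q x c ∧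
      ∀ i, c i - mcR q i ≤ 2 * (q : ℝ) + 1) :
    ∃ U V : Finset ℕ, U ∪ V = Finset.Icc 1 l ∧ Disjoint U V ∧
      ∑ i ∈ U, x i = q ∧ ∑ i ∈ V, x i = q := by
  classical
  obtain ⟨c, hc, hd⟩ := h
  set U := (Finset.Icc 1 l).filter fun i => mcMergeInterval c x i ⊆ Icc q (q + q)
  set V := (Finset.Icc 1 l).filter fun i => ¬ mcMergeInterval c x i ⊆ Icc q (q + q)
  have hUV : U ∪ V = Finset.Icc 1 l := Finset.filter_union_filter_not_eq _ _
  have hdisj : Disjoint U V := Finset.disjoint_filter_filter_not _ _ _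
  have hU : ∑ i ∈ U, x i ≤ q :=
    hc.sum_le (Finset.filter_subset _ _) fun i hi => (Finset.mem_filter.mp hi).2
  have hV : ∑ i ∈ V, x i ≤ q := hc.sum_le (Finset.filter_subset _ _) fun i hi => by
    obtain ⟨hi, hiU⟩ := Finset.mem_filter.mp hi
    rw [Finset.mem_Icc] at hi
    exact (hc.mcMergeInterval_subset hd hi.1 hi.2).resolve_left hiU
  have htotal := Finset.sum_union hdisj (f := x)
  rw [hUV, hsum] at htotal
  exact ⟨U, V, hUV, hdisj, by omega, by omega⟩

/-- If the associated MULTI-CROSS instance admits a valid schedule with delay at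
most `2q + 1`, then the index set `{1, …, l}` can be partitioned into `U` and `V`
with `Σ_{i ∈ U} x i = Σ_{i ∈ V} x i = q`. -/
theorem stmt12 (l q : ℕ) (x : ℕ → ℕ) (hq : 0 < q)
    (hx : ∀ i, 1 ≤ i → i ≤ l → 0 < x i)
    (hsum : ∑ i ∈ Finset.Icc 1 l, x i = 2 * q)
    (h : ∃ c : Fin (l + 3) → ℝ, mcValid l q x c ∧
      ∀ i, c i - mcR q i ≤ 2 * (q : ℝ) + 1) :
    ∃ U V : Finset ℕ, U ∪ V = Finset.Icc 1 l ∧ Disjoint U V ∧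
      ∑ i ∈ U, x i = q ∧ ∑ i ∈ V, x i = q :=
  stmt12_general l q x hsum h
end
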